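/- Let λ = γ = (1+√5)/2 and T(x,y) = (y, {y/γ − x}) on [0,1)². Let 𝓡 = {(x,y) ∈ [0,1)² : y < γx, x + y > 1, x < γy} ∪ {(0,0)}, 𝓓 = [0,1)² ∖ 𝓡, D₀ = {(x,y) ∈ [0,1)² : y ≥ γx} ∖ {(0,0)}, and D₁ = 𝓓 ∖ D₀. Then for every z ∈ D₀ one has T(z)/γ² = T(z/γ²), and for every z ∈ D₁ one has T(z)/γ² = T⁶(z/γ²), where z/γ² denotes coordinatewise division by γ². -/

import Mathlib

noncomputable def gamma : ℝ := (1 + Real.sqrt 5) / 2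

/-- The map T(x,y) = (y, {y/γ - x}) for λ = γ. -/
noncomputable def T : ℝ × ℝ → ℝ × ℝ := fun z => (z.2, Int.fract (z.2 / gamma - z.1))

/-- Coordinatewise division of a point by a positive real. -/
noncomputable def divP (z : ℝ × ℝ) (r : ℝ) : ℝ × ℝ := (z.1 / r, z.2 / r)

/-- The set 𝓡. -/
noncomputable def Rcal : Set (ℝ × ℝ) :=
  {z : ℝ × ℝ | z.1 ∈ Set.Ico (0 : ℝ) 1 ∧ z.2 ∈ Set.Ico (0 : ℝ) 1 ∧
    z.2 < gamma * z.1 ∧ 1 < z.1 + z.2 ∧ z.1 < gamma * z.2} ∪ {(0, 0)}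

/-- The set 𝓓 = [0,1)² \ 𝓡. -/
noncomputable def Dcal : Set (ℝ × ℝ) :=
  {z : ℝ × ℝ | z.1 ∈ Set.Ico (0 : ℝ) 1 ∧ z.2 ∈ Set.Ico (0 : ℝ) 1} \ Rcal

/-- The set D₀. -/
noncomputable def D0 : Set (ℝ × ℝ) :=
  {z : ℝ × ℝ | z.1 ∈ Set.Ico (0 : ℝ) 1 ∧ z.2 ∈ Set.Ico (0 : ℝ) 1 ∧
    gamma * z.1 ≤ z.2} \ {(0, 0)}

/-- The set D₁. -/
noncomputable def D1 : Set (ℝ × ℝ) := Dcal \ D0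

/-!
Write `e = 1/γ`, so that `e² = 1 - e`, and let `T` act on the scaled point `(a, b) = z/γ²`.
Every step of `T` is the linear map `(p, q) ↦ (q, e q - p)` followed by an integer translation,
so along an explicit orbit only the integer parts have to be tracked. On `D₀` the fractional part
in `T z` is the identity and `T` commutes with the scaling. On `D₁` the scaled point lies in
`0 ≤ a, b < e²`, `e b < a`, where `T⁵` is the translation by `(e, 0)` (the linear part has
order 5, its eigenvalues being primitive fifth roots of unity), and one more step of `T` from
`(a + e, b)` lands on `T(z)/γ²`.
-/

open Real Set

lemma one_lt_gamma : 1 < gamma := one_lt_goldenRatio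

lemma gamma_inv_pos : 0 < gamma⁻¹ := inv_pos.2 goldenRatio_pos

lemma gamma_inv_lt_one : gamma⁻¹ < 1 := inv_lt_one_of_one_lt₀ one_lt_gamma

lemma gamma_inv_sq : gamma⁻¹ ^ 2 = 1 - gamma⁻¹ := by
  rw [show gamma = goldenRatio from rfl, inv_goldenRatio, neg_sq, goldenConj_sq]
  ring

lemma half_lt_gamma_inv : 1 / 2 < gamma⁻¹ := by
  nlinarith [gamma_inv_sq, gamma_inv_pos]

lemma divP_gamma_sq (z : ℝ × ℝ) :
    divP z (gamma ^ 2) = (gamma⁻¹ ^ 2 * z.1, gamma⁻¹ ^ 2 * z.2) := by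
  simp only [divP, div_eq_inv_mul, inv_pow]

lemma T_eq_of_mem_Ico {p q v : ℝ} (k : ℤ) (hv : v ∈ Ico 0 1)
    (h : gamma⁻¹ * q - p + k = v) : T (p, q) = (q, v) :=
  Prod.ext rfl <| Int.fract_eq_iff.2
    ⟨hv.1, hv.2, -k, by push_cast; rw [← h, div_eq_inv_mul]; ring⟩

lemma divP_T_of_mem_Ico {z : ℝ × ℝ} {r : ℝ} (hr : 1 ≤ r)
    (hz : gamma⁻¹ * z.2 - z.1 ∈ Ico 0 1) : divP (T z) r = T (divP z r) := by
  have hr₀ : 0 < r := one_pos.trans_le hr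
  have hscaled : (gamma⁻¹ * z.2 - z.1) / r ∈ Ico 0 1 :=
    ⟨div_nonneg hz.1 hr₀.le, (div_le_self hz.1 hr).trans_lt hz.2⟩
  rw [T_eq_of_mem_Ico 0 hz (by simp), divP, divP,
    T_eq_of_mem_Ico 0 hscaled (by simp only [Int.cast_zero, add_zero]; ring)]

lemma T_iterate_five {a b : ℝ} (ha : a ∈ Ico 0 (gamma⁻¹ ^ 2))
    (hb : b ∈ Ico 0 (gamma⁻¹ ^ 2)) (hab : gamma⁻¹ * b < a) :
    T^[5] (a, b) = (a + gamma⁻¹, b) := by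
  obtain ⟨ha₀, ha₁⟩ := ha
  obtain ⟨hb₀, hb₁⟩ := hb
  set e := gamma⁻¹
  have he2 : e ^ 2 = 1 - e := gamma_inv_sq
  have he0 : 0 < e := gamma_inv_pos
  have he : 1 / 2 < e := half_lt_gamma_inv
  have hea : e * a < e * e ^ 2 := mul_lt_mul_of_pos_left ha₁ he0
  have hea₀ : 0 ≤ e * a := mul_nonneg he0.le ha₀
  have heb₀ : 0 ≤ e * b := mul_nonneg he0.le hb₀
  have hsum : e * (a + b) < e := by nlinarith
  have h1 : T (a, b) = (b, e * b - a + 1) :=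
    T_eq_of_mem_Ico 1 ⟨by nlinarith, by linarith⟩ (by push_cast; ring)
  have h2 : T (b, e * b - a + 1) = (e * b - a + 1, e - e * (a + b)) :=
    T_eq_of_mem_Ico 0 ⟨by linarith, by nlinarith⟩ (by push_cast; linear_combination b * he2)
  have h3 : T (e * b - a + 1, e - e * (a + b)) = (e - e * (a + b), e * a - b + e ^ 2) :=
    T_eq_of_mem_Ico 1 ⟨by nlinarith, by nlinarith⟩
      (by push_cast; linear_combination -(a + b) * he2)
  have h4 : T (e - e * (a + b), e * a - b + e ^ 2) = (e * a - b + e ^ 2, a + e) :=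
    T_eq_of_mem_Ico 1 ⟨by linarith, by linarith⟩
      (by push_cast; linear_combination (a + e - 1) * he2)
  have h5 : T (e * a - b + e ^ 2, a + e) = (a + e, b) :=
    T_eq_of_mem_Ico 0 ⟨hb₀, by linarith⟩ (by push_cast; ring)
  simp only [Function.iterate_succ, Function.iterate_zero, Function.comp_apply, id]
  rw [h1, h2, h3, h4, h5]

lemma divP_T_of_lt {x y : ℝ} (hx : x ∈ Ico 0 1) (hy : y ∈ Ico 0 1)
    (hxy : gamma⁻¹ * y < x) :
    divP (T (x, y)) (gamma ^ 2) = T^[6] (divP (x, y) (gamma ^ 2)) := by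
  rw [divP_gamma_sq, divP_gamma_sq, Function.iterate_succ_apply']
  obtain ⟨hx₀, hx₁⟩ := hx
  obtain ⟨hy₀, hy₁⟩ := hy
  set e := gamma⁻¹ with he
  have he2 : e ^ 2 = 1 - e := gamma_inv_sq
  have he0 : 0 < e := gamma_inv_pos
  have hcoord {t : ℝ} (ht₀ : 0 ≤ t) (ht₁ : t < 1) : e ^ 2 * t ∈ Ico 0 (e ^ 2) :=
    ⟨by positivity, mul_lt_of_lt_one_right (by positivity) ht₁⟩
  have hscaled : e * (e ^ 2 * y) < e ^ 2 * x := by nlinarith [mul_lt_mul_of_pos_left hxy he0]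
  have hv : e * y - x + 1 ∈ Ico 0 1 := ⟨by nlinarith, by linarith⟩
  have hTz : T (x, y) = (y, e * y - x + 1) := T_eq_of_mem_Ico 1 hv (by push_cast; ring)
  have hstep : T (e ^ 2 * x + e, e ^ 2 * y) = (e ^ 2 * y, e ^ 2 * (e * y - x + 1)) :=
    T_eq_of_mem_Ico 1 ⟨by nlinarith [hv.1], by nlinarith [hv.2]⟩
      (by push_cast; linear_combination -he2)
  rw [T_iterate_five (hcoord hx₀ hx₁) (hcoord hy₀ hy₁) hscaled, ← he, hstep, hTz]

lemma sub_mem_Ico_of_mem_D0 {z : ℝ × ℝ} (hz : z ∈ D0) :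
    gamma⁻¹ * z.2 - z.1 ∈ Ico 0 1 := by
  obtain ⟨⟨⟨hx₀, -⟩, ⟨-, hy₁⟩, hle⟩, -⟩ := hz
  refine ⟨sub_nonneg.2 ((le_inv_mul_iff₀ goldenRatio_pos).2 hle), ?_⟩
  nlinarith [gamma_inv_lt_one, gamma_inv_pos]

lemma lt_of_mem_D1 {z : ℝ × ℝ} (hz : z ∈ D1) :
    z.1 ∈ Ico 0 1 ∧ z.2 ∈ Ico 0 1 ∧ gamma⁻¹ * z.2 < z.1 := by
  obtain ⟨⟨⟨hx, hy⟩, hzR⟩, hzD0⟩ := hz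
  have hz0 : z ∉ ({(0, 0)} : Set (ℝ × ℝ)) := fun h => hzR (Or.inr h)
  refine ⟨hx, hy, (inv_mul_lt_iff₀ goldenRatio_pos).2 (not_le.1 fun hle => ?_)⟩
  exact hzD0 ⟨⟨hx, hy, hle⟩, hz0⟩

/-- self-similarity of T under scaling by 1/γ². -/
theorem stmt_2 :
    (∀ z ∈ D0, divP (T z) (gamma ^ 2) = T (divP z (gamma ^ 2))) ∧
    (∀ z ∈ D1, divP (T z) (gamma ^ 2) = T^[6] (divP z (gamma ^ 2))) := by
  refine ⟨fun z hz => ?_, fun z hz => ?_⟩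
  · exact divP_T_of_mem_Ico (one_le_pow₀ one_lt_gamma.le) (sub_mem_Ico_of_mem_D0 hz)
  · obtain ⟨hx, hy, hlt⟩ := lt_of_mem_D1 hz
    exact divP_T_of_lt hx hy hlt
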